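/- arXiv:1710.06988 — 2 statements merged into one kernel-verified Lean document; each statement's English description precedes it below -/
import Mathlib

section
/- For every real x > 0, one has 1 ≤ sinh(x)/x ≤ exp(x²/6). -/
open Nat

theorem Nat.six_pow_mul_factorial_le_factorial_two_mul_add_one (n : ℕ) :
    6 ^ n * n ! ≤ (2 * n + 1)! := by
  induction n with
  | zero => simp
  | succ n ih =>
    calc 6 ^ (n + 1) * (n + 1)! = 6 * (n + 1) * (6 ^ n * n !) := by
          rw [factorial_succ]; ring
      _ ≤ (2 * n + 3) * (2 * n + 2) * (2 * n + 1)! :=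
          Nat.mul_le_mul (by nlinarith) ih
      _ = (2 * (n + 1) + 1)! := by
          rw [show 2 * (n + 1) + 1 = 2 * n + 1 + 1 + 1 by ring, factorial_succ (2 * n + 1 + 1),
            factorial_succ (2 * n + 1), mul_assoc]

namespace Real

/-- The series of `sinh x` is dominated termwise by that of `x * exp (x ^ 2 / 6)`, since
`6 ^ n * n ! ≤ (2 * n + 1)!`. -/
lemma sinh_le_mul_exp_sq_div_six {x : ℝ} (hx : 0 ≤ x) : sinh x ≤ x * exp (x ^ 2 / 6) := by
  have hexp : HasSum (fun n : ℕ ↦ x * ((x ^ 2 / 6) ^ n / n !)) (x * exp (x ^ 2 / 6)) := by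
    rw [exp_eq_exp_ℝ]
    exact (NormedSpace.expSeries_div_hasSum_exp (x ^ 2 / 6)).mul_left x
  refine hasSum_le (fun n ↦ ?_) x.hasSum_sinh hexp
  have hfac : (6 : ℝ) ^ n * n ! ≤ (2 * n + 1)! := by
    exact_mod_cast Nat.six_pow_mul_factorial_le_factorial_two_mul_add_one n
  calc x ^ (2 * n + 1) / (2 * n + 1)! ≤ x ^ (2 * n + 1) / (6 ^ n * n !) := by
        gcongr
    _ = x * ((x ^ 2 / 6) ^ n / n !) := by
        rw [div_pow, ← pow_mul, pow_succ]
        field_simp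

end Real

theorem sinh_div_self_bounds (x : ℝ) (hx : 0 < x) :
    1 ≤ Real.sinh x / x ∧ Real.sinh x / x ≤ Real.exp (x ^ 2 / 6) := by
  constructor
  · rw [le_div_iff₀ hx, one_mul]
    exact Real.self_le_sinh_iff.mpr hx.le
  · rw [div_le_iff₀ hx, mul_comm]
    exact Real.sinh_le_mul_exp_sq_div_six hx.le
end

section
/- Let γ ≥ 3/2 and let ξ ~ Beta(1,γ). Then for every r ≥ 8, P(log((1+√ξ)/(1−√ξ)) > r^{1/3}/√γ) ≤ exp(−r^{1/3}/3). -/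
/-!
Since `log ((1 + √ξ) / (1 - √ξ)) = 2 artanh √ξ`, the event `log (…) > u` is `ξ > tanh (u / 2) ^ 2`,
whose Beta(1, γ) probability is `(1 - tanh (u / 2) ^ 2) ^ γ = (cosh (u / 2) ^ 2)⁻¹ ^ γ`.
With `ρ = r ^ (1 / 3) ≥ 2` and `u = ρ / √γ` it remains to show `exp (ρ / (3 γ)) ≤ cosh (u / 2) ^ 2`.
For `v = u / 2 ≥ 2 log 2` this follows from `cosh v ≥ exp v / 2` and `exp v ≥ 4`; for smaller `v`
from `cosh v ≥ 1 + v ^ 2 / 2 ≥ exp (v ^ 2 / 3)` and `ρ ^ 2 ≥ 2 ρ`.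
-/

open MeasureTheory

/-- The Beta(1,γ) distribution: density `γ (1-x)^(γ-1)` on `[0,1]` w.r.t. Lebesgue. -/
noncomputable def betaOneGamma (γ : ℝ) : Measure ℝ :=
  volume.withDensity fun x =>
    ENNReal.ofReal (Set.indicator (Set.Icc (0 : ℝ) 1) (fun y => γ * (1 - y) ^ (γ - 1)) x)

open Real Set

namespace Real

lemma tanh_nonneg {x : ℝ} (hx : 0 ≤ x) : 0 ≤ tanh x := by
  rw [tanh_eq_sinh_div_cosh]
  exact div_nonneg (sinh_nonneg_iff.mpr hx) (cosh_pos x).le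

lemma tanh_half_sq_lt_of_lt_log {u x : ℝ} (hu : 0 ≤ u)
    (h : u < log ((1 + √x) / (1 - √x))) : tanh (u / 2) ^ 2 < x := by
  rcases lt_or_ge 1 x with hx₁ | hx₁
  · exact (tanh_sq_lt_one _).trans hx₁
  have hs : √x ∈ Icc (-1) 1 := ⟨by linarith [sqrt_nonneg x], sqrt_le_one.mpr hx₁⟩
  have hartanh : u / 2 < artanh √x := by rw [artanh_eq_half_log hs]; linarith
  have hs₁ : √x < 1 := by
    refine lt_of_le_of_ne hs.2 fun h1 => ?_
    rw [h1, artanh_eq_zero_iff.mpr (Or.inr (Or.inr le_rfl))] at hartanh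
    linarith
  have htanh : tanh (u / 2) < √x := by
    rwa [← artanh_lt_artanh_iff ⟨neg_one_lt_tanh _, tanh_lt_one _⟩
      ⟨by linarith [sqrt_nonneg x], hs₁⟩, artanh_tanh]
  have h0 := tanh_nonneg (by positivity : 0 ≤ u / 2)
  calc tanh (u / 2) ^ 2 < √x ^ 2 := pow_lt_pow_left₀ htanh h0 two_ne_zero
    _ = x := sq_sqrt (sqrt_pos.mp (h0.trans_lt htanh)).le

lemma one_sub_tanh_sq (x : ℝ) : 1 - tanh x ^ 2 = (cosh x ^ 2)⁻¹ := by
  have := cosh_pos x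
  rw [tanh_eq_sinh_div_cosh, div_pow, cosh_sq']
  field_simp
  ring

lemma exp_le_cosh_sq_of_two_mul_log_two_le {v : ℝ} (hv : 2 * log 2 ≤ v) :
    exp v ≤ cosh v ^ 2 := by
  have h4 : 4 ≤ exp v := by
    calc (4 : ℝ) = exp (2 * log 2) := by
          rw [two_mul, exp_add, exp_log two_pos]; norm_num
      _ ≤ exp v := exp_le_exp.mpr hv
  have hcosh : exp v / 2 ≤ cosh v := by rw [cosh_eq]; linarith [exp_pos (-v)]
  nlinarith [exp_pos v]

lemma one_add_sq_div_two_le_cosh (v : ℝ) : 1 + v ^ 2 / 2 ≤ cosh v := by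
  have hcosh : cosh v = 1 + 2 * sinh (v / 2) ^ 2 := by
    have h := cosh_two_mul (v / 2)
    rw [mul_div_cancel₀ v two_ne_zero, cosh_sq'] at h
    linarith
  have hsinh : (v / 2) ^ 2 ≤ sinh (v / 2) ^ 2 := by
    rcases le_total 0 (v / 2) with h | h
    · exact pow_le_pow_left₀ h (self_le_sinh_iff.mpr h) 2
    · nlinarith [sinh_le_self_iff.mpr h, sinh_nonpos_iff.mpr h]
  rw [hcosh]; linarith

lemma exp_le_one_add_three_halves_mul {y : ℝ} (h₀ : 0 ≤ y) (h₁ : y ≤ 3 / 4) :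
    exp y ≤ 1 + 3 * y / 2 := by
  have hb := exp_bound' h₀ (by linarith) (n := 3) (by norm_num)
  norm_num [Finset.sum_range_succ, Nat.factorial] at hb
  nlinarith [pow_nonneg h₀ 2, pow_nonneg h₀ 3]

lemma exp_sq_div_three_le_cosh {v : ℝ} (hv : |v| ≤ 3 / 2) : exp (v ^ 2 / 3) ≤ cosh v := by
  have hv2 : v ^ 2 ≤ 9 / 4 := by nlinarith [sq_abs v, abs_nonneg v]
  calc exp (v ^ 2 / 3) ≤ 1 + 3 * (v ^ 2 / 3) / 2 :=
        exp_le_one_add_three_halves_mul (by positivity) (by linarith)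
    _ = 1 + v ^ 2 / 2 := by ring
    _ ≤ cosh v := one_add_sq_div_two_le_cosh v

end Real

lemma integral_mul_one_sub_rpow {γ : ℝ} (hγ : 0 < γ) (t : ℝ) :
    ∫ x in t..1, γ * (1 - x) ^ (γ - 1) = (1 - t) ^ γ := by
  rw [intervalIntegral.integral_const_mul,
    intervalIntegral.integral_comp_sub_left (fun x : ℝ => x ^ (γ - 1)) 1, sub_self,
    integral_rpow (Or.inl (by linarith)), sub_add_cancel, zero_rpow hγ.ne', sub_zero]
  field_simp

lemma intervalIntegrable_mul_one_sub_rpow {γ : ℝ} (hγ : 0 < γ) (t : ℝ) :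
    IntervalIntegrable (fun x => γ * (1 - x) ^ (γ - 1)) volume t 1 := by
  have h := (intervalIntegral.intervalIntegrable_rpow' (a := 1 - t) (b := 1 - 1)
    (r := γ - 1) (by linarith)).comp_sub_left 1
  simp only [sub_sub_cancel] at h
  exact h.const_mul γ

lemma betaOneGamma_Ioi {γ t : ℝ} (hγ : 0 < γ) (ht₀ : 0 ≤ t) (ht₁ : t ≤ 1) :
    betaOneGamma γ (Ioi t) = ENNReal.ofReal ((1 - t) ^ γ) := by
  have hIoc : Icc 0 1 ∩ Ioi t = Ioc t 1 := by
    ext x; simp only [mem_inter_iff, mem_Icc, mem_Ioi, mem_Ioc]; grind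
  have hnonneg : 0 ≤ᵐ[volume.restrict (Ioc t 1)] fun x => γ * (1 - x) ^ (γ - 1) := by
    filter_upwards [ae_restrict_mem measurableSet_Ioc] with x hx
    exact mul_nonneg hγ.le (rpow_nonneg (by linarith [hx.2]) _)
  rw [betaOneGamma, withDensity_apply _ measurableSet_Ioi,
    ← Function.comp_def ENNReal.ofReal, ← indicator_comp_of_zero ENNReal.ofReal_zero,
    lintegral_indicator measurableSet_Icc, Measure.restrict_restrict measurableSet_Icc, hIoc]
  simp only [Function.comp_apply]
  rw [← ofReal_integral_eq_lintegral_ofReal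
      ((intervalIntegrable_iff_integrableOn_Ioc_of_le ht₁).mp
        (intervalIntegrable_mul_one_sub_rpow hγ t)) hnonneg,
    ← intervalIntegral.integral_of_le ht₁, integral_mul_one_sub_rpow hγ]

lemma exp_div_le_cosh_sq {ρ γ : ℝ} (hρ : 2 ≤ ρ) (hγ : 4 / 9 ≤ γ) :
    exp (ρ / (3 * γ)) ≤ cosh (ρ / √γ / 2) ^ 2 := by
  have hs : 2 / 3 ≤ √γ := (le_sqrt (by norm_num) (by linarith)).mpr (by linarith)
  have hγs : √γ ^ 2 = γ := sq_sqrt (by linarith)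
  set v := ρ / √γ / 2 with hv
  have hv₀ : 0 ≤ v := by positivity
  rcases le_or_gt (2 * log 2) v with hlarge | hsmall
  · calc exp (ρ / (3 * γ)) ≤ exp v := by
          refine exp_le_exp.mpr ?_
          rw [hv, div_div, div_le_div_iff_of_pos_left (by linarith) (by positivity)
            (by positivity)]
          nlinarith
      _ ≤ cosh v ^ 2 := exp_le_cosh_sq_of_two_mul_log_two_le hlarge
  · have hv₁ : |v| ≤ 3 / 2 := by
      rw [abs_of_nonneg hv₀]; linarith [log_two_lt_d9]
    calc exp (ρ / (3 * γ)) ≤ exp (v ^ 2 / 3) ^ 2 := by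
          rw [← exp_nat_mul]
          refine exp_le_exp.mpr ?_
          rw [hv, div_pow, div_pow, hγs]
          push_cast
          field_simp
          nlinarith
      _ ≤ cosh v ^ 2 := pow_le_pow_left₀ (exp_pos _).le (exp_sq_div_three_le_cosh hv₁) 2

lemma one_sub_tanh_sq_rpow_le {ρ γ : ℝ} (hρ : 2 ≤ ρ) (hγ : 4 / 9 ≤ γ) :
    (1 - tanh (ρ / √γ / 2) ^ 2) ^ γ ≤ exp (-ρ / 3) := by
  rw [one_sub_tanh_sq]
  calc (cosh (ρ / √γ / 2) ^ 2)⁻¹ ^ γ ≤ (exp (ρ / (3 * γ)))⁻¹ ^ γ :=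
        rpow_le_rpow (by positivity) (inv_anti₀ (exp_pos _) (exp_div_le_cosh_sq hρ hγ))
          (by linarith)
    _ = exp (-ρ / 3) := by
        rw [← exp_neg, ← exp_mul]
        congr 1
        field_simp

theorem beta_log_tail_bound_general {Ω : Type*} [MeasurableSpace Ω] (ℙ : Measure Ω)
    (γ : ℝ) (hγ : 3 / 2 ≤ γ) (X : Ω → ℝ) (hX : Measurable X)
    (hlaw : Measure.map X ℙ = betaOneGamma γ) (r : ℝ) (hr : 8 ≤ r) :
    ℙ {ω | r ^ ((1 : ℝ) / 3) / Real.sqrt γ <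
        Real.log ((1 + Real.sqrt (X ω)) / (1 - Real.sqrt (X ω)))} ≤
      ENNReal.ofReal (Real.exp (-(r ^ ((1 : ℝ) / 3)) / 3)) := by
  set ρ := r ^ ((1 : ℝ) / 3)
  have hρ : 2 ≤ ρ := by
    calc (2 : ℝ) = 8 ^ ((1 : ℝ) / 3) := by
          rw [show (8 : ℝ) = 2 ^ (3 : ℝ) by norm_num, ← rpow_mul (by norm_num)]; norm_num
      _ ≤ ρ := rpow_le_rpow (by norm_num) hr (by norm_num)
  set t := tanh (ρ / √γ / 2) ^ 2
  calc ℙ {ω | ρ / √γ < log ((1 + √(X ω)) / (1 - √(X ω)))} ≤ ℙ (X ⁻¹' Ioi t) :=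
        measure_mono fun ω hω => tanh_half_sq_lt_of_lt_log (by positivity) hω
    _ = betaOneGamma γ (Ioi t) := by rw [← hlaw, Measure.map_apply hX measurableSet_Ioi]
    _ = ENNReal.ofReal ((1 - t) ^ γ) :=
        betaOneGamma_Ioi (by linarith) (sq_nonneg _) (tanh_sq_lt_one _).le
    _ ≤ ENNReal.ofReal (exp (-ρ / 3)) :=
        ENNReal.ofReal_le_ofReal (one_sub_tanh_sq_rpow_le hρ (by linarith))

theorem beta_log_tail_bound {Ω : Type*} [MeasurableSpace Ω] (ℙ : Measure Ω)
    [IsProbabilityMeasure ℙ] (γ : ℝ) (hγ : 3 / 2 ≤ γ) (X : Ω → ℝ) (hX : Measurable X)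
    (hlaw : Measure.map X ℙ = betaOneGamma γ) (r : ℝ) (hr : 8 ≤ r) :
    ℙ {ω | r ^ ((1 : ℝ) / 3) / Real.sqrt γ <
        Real.log ((1 + Real.sqrt (X ω)) / (1 - Real.sqrt (X ω)))} ≤
      ENNReal.ofReal (Real.exp (-(r ^ ((1 : ℝ) / 3)) / 3)) :=
  beta_log_tail_bound_general ℙ γ hγ X hX hlaw r hr
end
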